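/- For every positive integer m and real u > 0, the (finite) identity ∑_{n=0}^m (1/(n+d+1)) ∑_{k=0}^n (-1)^k C(n,k) (k+u)^m = (1/d!) ∑_{k=0}^d [d+1-u, k+1-u]_{1-u} * B_{m+k}(u) holds for every integer d ≥ 0, where B_j(u) denotes the j-th Bernoulli polynomial evaluated at u. -/

import Mathlib

/-- Shifted r-Stirling number `[n+r, m+r]_r`: the coefficient of `x^m` in
`(x+r)(x+r+1)⋯(x+r+n-1)`. -/
noncomputable def rStirling {R : Type*} [CommRing R] (r : R) (n m : ℕ) : R :=
  (∏ i ∈ Finset.range n, (Polynomial.X + Polynomial.C (r + (i : R)))).coeff m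

open Finset Polynomial
open scoped fwdDiff Nat

/-!
Write `A_n(m) = ∑ₖ (-1)ᵏ C(n,k) (k+u)ᵐ`, which is `(-1)ⁿ Δⁿ xᵐ` at `x = u`, so that it vanishes for
`n > m`, and `T_d(m) = ∑ₙ A_n(m) / (n+d+1)` for the left-hand side. Splitting
`(k+u)^(m+1) = (k+u)(k+u)^m` gives a recurrence for `A_n` in `m`, and it turns into
`(d+1) T_{d+1}(m) = T_d(m+1) + (d+1-u) T_d(m)`. Multiplying the polynomial that defines the
r-Stirling numbers by `x + d + 1 - u` shows that `d!⁻¹ ∑ₖ [d+1-u, k+1-u]_{1-u} B_{m+k}(u)` satisfies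
the same recurrence. At `d = 0` both sides agree by Hasse's formula `T_0(m) = B_m(u)`, proved by
checking that `T_0` satisfies the recursion `∑_{j ≤ M} C(M+1,j) B_j(u) = (M+1) u^M` which
determines the Bernoulli polynomials.
-/

section AltBinomSum

variable {R : Type*} [CommRing R]

noncomputable def altBinomSum (u : R) (n m : ℕ) : R :=
  ∑ k ∈ range (n + 1), (-1) ^ k * (n.choose k : R) * ((k : R) + u) ^ m

theorem altBinomSum_eq_neg_one_pow_mul_fwdDiff_iter (u : R) (n m : ℕ) :
    altBinomSum u n m = (-1) ^ n * (Δ_[1])^[n] (fun x : R ↦ x ^ m) u := by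
  rw [fwdDiff_iter_eq_sum_shift, mul_sum, altBinomSum]
  refine sum_congr rfl fun k hk ↦ ?_
  have hkn : k ≤ n := Nat.lt_succ_iff.mp (mem_range.mp hk)
  obtain ⟨j, rfl⟩ := Nat.exists_eq_add_of_le hkn
  simp only [zsmul_eq_mul, nsmul_eq_mul, mul_one, Nat.add_sub_cancel_left]
  push_cast
  have hj : (-1 : R) ^ j * (-1) ^ j = 1 := by rw [← pow_add, Even.neg_one_pow ⟨j, rfl⟩]
  rw [add_comm u, pow_add]
  linear_combination (-(-1) ^ k * ((k + j).choose k : R) * ((k : R) + u) ^ m) * hj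

theorem altBinomSum_eq_zero_of_lt (u : R) {n m : ℕ} (h : m < n) : altBinomSum u n m = 0 := by
  rw [altBinomSum_eq_neg_one_pow_mul_fwdDiff_iter, fwdDiff_iter_pow_eq_zero_of_lt h,
    Pi.zero_apply, mul_zero]

@[simp]
theorem altBinomSum_zero_left (u : R) (m : ℕ) : altBinomSum u 0 m = u ^ m := by
  simp [altBinomSum]

theorem altBinomSum_succ_left (u : R) (n m : ℕ) :
    altBinomSum u (n + 1) m = altBinomSum u n m - altBinomSum (u + 1) n m := by
  simp only [altBinomSum_eq_neg_one_pow_mul_fwdDiff_iter, Function.iterate_succ_apply', fwdDiff]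
  ring

theorem altBinomSum_add_one (u : R) (n m : ℕ) :
    altBinomSum (u + 1) n m = ∑ j ∈ range (m + 1), (m.choose j : R) * altBinomSum u n j := by
  simp_rw [altBinomSum, mul_sum]
  rw [sum_comm]
  refine sum_congr rfl fun k _ ↦ ?_
  rw [← add_assoc, add_pow, mul_sum]
  exact sum_congr rfl fun j _ ↦ by ring

theorem altBinomSum_succ_succ (u : R) (n m : ℕ) :
    altBinomSum u (n + 1) (m + 1) =
      (u + n + 1) * altBinomSum u (n + 1) m - (n + 1) * altBinomSum u n m := by
  -- `k * C(n+1, k) = (n+1) * C(n, k-1)` turns the factor `k` of `(k + u)^(m+1)` into a shift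
  have hk : ∑ k ∈ range (n + 2), (-1) ^ k * ((n + 1).choose k : R) * k * ((k : R) + u) ^ m =
      -((n + 1) * altBinomSum (u + 1) n m) := by
    rw [sum_range_succ', altBinomSum, mul_sum, ← sum_neg_distrib]
    simp only [Nat.cast_zero, mul_zero, zero_mul, add_zero]
    refine sum_congr rfl fun k _ ↦ ?_
    have := congrArg (Nat.cast (R := R)) (Nat.add_one_mul_choose_eq n k)
    push_cast at this ⊢
    linear_combination (-1) ^ k * ((k : R) + (u + 1)) ^ m * this
  have hsplit : altBinomSum u (n + 1) (m + 1) = u * altBinomSum u (n + 1) m +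
      ∑ k ∈ range (n + 2), (-1) ^ k * ((n + 1).choose k : R) * k * ((k : R) + u) ^ m := by
    rw [altBinomSum, altBinomSum, mul_sum, ← sum_add_distrib]
    exact sum_congr rfl fun k _ ↦ by ring
  rw [hsplit, hk, altBinomSum_succ_left u n m]
  ring

theorem altBinomSum_succ_right (u : R) (n m : ℕ) :
    altBinomSum u n (m + 1) = (u + n) * altBinomSum u n m - n * altBinomSum u (n - 1) m := by
  cases n with
  | zero => simp [pow_succ, mul_comm]
  | succ n =>
    rw [altBinomSum_succ_succ, Nat.add_sub_cancel]
    push_cast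
    ring

end AltBinomSum

theorem sum_rStirling_succ_mul {R : Type*} [CommRing R] (r : R) (n : ℕ) (g : ℕ → R) :
    ∑ k ∈ range (n + 2), rStirling r (n + 1) k * g k =
      ∑ k ∈ range (n + 1), rStirling r n k * g (k + 1) +
        (r + n) * ∑ k ∈ range (n + 1), rStirling r n k * g k := by
  set P : R[X] := ∏ i ∈ range n, (X + C (r + (i : R)))
  have hdeg : P.natDegree ≤ n := (natDegree_prod_le _ _).trans <|
    (sum_le_sum fun i _ ↦ natDegree_add_C.trans_le natDegree_X_le).trans (by simp)
  have hcoeff : ∀ k, rStirling r (n + 1) k = (P * X).coeff k + (r + n) * P.coeff k := fun k ↦ by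
    rw [rStirling, prod_range_succ, mul_add, coeff_add, coeff_mul_C, mul_comm _ (r + _)]
  rw [sum_congr rfl fun k _ ↦ by rw [hcoeff, add_mul], sum_add_distrib]
  congr 1
  · rw [sum_range_succ', coeff_mul_X_zero, zero_mul, add_zero]
    simp only [coeff_mul_X]
    rfl
  · rw [sum_range_succ, coeff_eq_zero_of_natDegree_lt (by omega), mul_zero, zero_mul, add_zero,
      mul_sum]
    exact sum_congr rfl fun k _ ↦ mul_assoc _ _ _

section HasseSum

variable {K : Type*} [Field K]

noncomputable def hasseSum (u : K) (d m : ℕ) : K :=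
  ∑ n ∈ range (m + 1), 1 / ((n : K) + d + 1) * altBinomSum u n m

theorem hasseSum_eq_sum_range (u : K) (d : ℕ) {m N : ℕ} (h : m ≤ N) :
    hasseSum u d m = ∑ n ∈ range (N + 1), 1 / ((n : K) + d + 1) * altBinomSum u n m := by
  refine sum_subset (range_subset_range.mpr (by omega)) fun n _ hn ↦ ?_
  rw [altBinomSum_eq_zero_of_lt u (by simpa using hn), mul_zero]

theorem hasseSum_succ_right (u : K) (d m : ℕ) :
    hasseSum u d (m + 1) = ∑ n ∈ range (m + 1),
      ((u + n) / ((n : K) + d + 1) - (n + 1) / ((n : K) + d + 2)) * altBinomSum u n m := by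
  have hshift : ∑ n ∈ range (m + 1 + 1), (n : K) / ((n : K) + d + 1) * altBinomSum u (n - 1) m =
      ∑ n ∈ range (m + 1), ((n : K) + 1) / ((n : K) + d + 2) * altBinomSum u n m := by
    rw [sum_range_succ']
    refine (add_eq_left.mpr (by simp)).trans (sum_congr rfl fun n _ ↦ ?_)
    push_cast
    ring_nf
  calc hasseSum u d (m + 1)
      = ∑ n ∈ range (m + 1 + 1), ((u + n) / ((n : K) + d + 1) * altBinomSum u n m -
          (n : K) / ((n : K) + d + 1) * altBinomSum u (n - 1) m) :=
        sum_congr rfl fun n _ ↦ by rw [altBinomSum_succ_right]; ring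
    _ = ∑ n ∈ range (m + 1), (u + n) / ((n : K) + d + 1) * altBinomSum u n m -
          ∑ n ∈ range (m + 1), ((n : K) + 1) / ((n : K) + d + 2) * altBinomSum u n m := by
        rw [sum_sub_distrib, hshift, sum_range_succ _ (m + 1),
          altBinomSum_eq_zero_of_lt u (Nat.lt_succ_self m), mul_zero, add_zero]
    _ = _ := by simp_rw [← sum_sub_distrib, sub_mul]

end HasseSum

section CharZero

variable {K : Type*} [Field K] [CharZero K]

theorem hasseSum_succ_left (u : K) (d m : ℕ) :
    (d + 1) * hasseSum u (d + 1) m = hasseSum u d (m + 1) + (d + 1 - u) * hasseSum u d m := by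
  rw [hasseSum_succ_right, hasseSum, hasseSum, mul_sum, mul_sum, ← sum_add_distrib]
  refine sum_congr rfl fun n _ ↦ ?_
  have h₁ : (n : K) + d + 1 ≠ 0 := by exact_mod_cast (n + d).succ_ne_zero
  have h₂ : (n : K) + d + 2 ≠ 0 := by exact_mod_cast (n + d + 1).succ_ne_zero
  rw [Nat.cast_add_one, show (n : K) + (d + 1) + 1 = n + d + 2 by ring]
  field_simp
  ring

theorem sum_div_mul_altBinomSum_succ (u : K) (M : ℕ) :
    ∑ n ∈ range (M + 1), 1 / ((n : K) + 1) * altBinomSum u (n + 1) (M + 1) =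
      -((M + 1) * u ^ M) := by
  induction M with
  | zero => norm_num [altBinomSum, sum_range_succ]
  | succ M ih =>
    have hterm : ∀ n : ℕ, 1 / ((n : K) + 1) * altBinomSum u (n + 1) (M + 1 + 1) =
        u * (1 / ((n : K) + 1) * altBinomSum u (n + 1) (M + 1)) +
          (altBinomSum u (n + 1) (M + 1) - altBinomSum u n (M + 1)) := fun n ↦ by
      have : (n : K) + 1 ≠ 0 := n.cast_add_one_ne_zero
      rw [altBinomSum_succ_succ]
      field_simp
      ring
    simp_rw [hterm]
    rw [sum_add_distrib, sum_range_sub (fun n ↦ altBinomSum u n (M + 1)), ← mul_sum,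
      sum_range_succ, ih, altBinomSum_eq_zero_of_lt u (by omega : M + 1 < M + 2), mul_zero,
      add_zero, altBinomSum_zero_left]
    push_cast
    ring

theorem sum_choose_mul_hasseSum_zero (u : K) (M : ℕ) :
    ∑ j ∈ range (M + 1), ((M + 1).choose j : K) * hasseSum u 0 j = (M + 1) * u ^ M := by
  have hchoose : ∀ n, ∑ j ∈ range (M + 1), ((M + 1).choose j : K) * altBinomSum u n j =
      -altBinomSum u (n + 1) (M + 1) := fun n ↦ by
    rw [altBinomSum_succ_left, altBinomSum_add_one, sum_range_succ _ (M + 1), Nat.choose_self]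
    ring
  calc ∑ j ∈ range (M + 1), ((M + 1).choose j : K) * hasseSum u 0 j
      = ∑ j ∈ range (M + 1), ∑ n ∈ range (M + 1),
          ((M + 1).choose j : K) * (1 / ((n : K) + 1) * altBinomSum u n j) := by
        refine sum_congr rfl fun j hj ↦ ?_
        rw [hasseSum_eq_sum_range u 0 (Nat.lt_succ_iff.mp (mem_range.mp hj)), mul_sum]
        simp
    _ = -∑ n ∈ range (M + 1), 1 / ((n : K) + 1) * altBinomSum u (n + 1) (M + 1) := by
        rw [sum_comm, ← sum_neg_distrib]
        refine sum_congr rfl fun n _ ↦ ?_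
        simp_rw [mul_left_comm _ (1 / ((n : K) + 1)), ← mul_sum, hchoose, mul_neg]
    _ = (M + 1) * u ^ M := by rw [sum_div_mul_altBinomSum_succ, neg_neg]

theorem sum_choose_mul_aeval_bernoulli (u : K) (M : ℕ) :
    ∑ j ∈ range (M + 1), ((M + 1).choose j : K) * aeval u (bernoulli j) = (M + 1) * u ^ M := by
  have h := congrArg (aeval u) (sum_bernoulli M)
  simp only [map_sum, map_smul, aeval_monomial, Rat.smul_def] at h
  simpa using h

theorem hasseSum_zero_left (u : K) (m : ℕ) : hasseSum u 0 m = aeval u (bernoulli m) := by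
  induction m using Nat.strong_induction_on with
  | _ m ih =>
    have h := (sum_choose_mul_hasseSum_zero u m).trans (sum_choose_mul_aeval_bernoulli u m).symm
    rw [sum_range_succ, sum_range_succ, sum_congr rfl fun j hj ↦ by rw [ih j (mem_range.mp hj)],
      add_right_inj] at h
    exact mul_left_cancel₀ (by rw [Nat.choose_succ_self_right]; exact_mod_cast m.succ_ne_zero) h

theorem factorial_mul_hasseSum (u : K) (d m : ℕ) :
    (d ! : K) * hasseSum u d m =
      ∑ k ∈ range (d + 1), rStirling (1 - u) d k * aeval u (bernoulli (m + k)) := by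
  induction d generalizing m with
  | zero => simp [rStirling, hasseSum_zero_left]
  | succ d ih =>
    have hshift : ∑ k ∈ range (d + 1), rStirling (1 - u) d k * aeval u (bernoulli (m + (k + 1))) =
        (d ! : K) * hasseSum u d (m + 1) := by
      simp_rw [ih, ← add_assoc, add_right_comm m _ 1]
    rw [sum_rStirling_succ_mul, hshift, ← ih, Nat.factorial_succ, Nat.cast_mul, Nat.cast_succ]
    linear_combination (d ! : K) * hasseSum_succ_left u d m

end CharZero

theorem stmt_7_general (m : ℕ) (u : ℝ) (d : ℕ) :
    (∑ n ∈ Finset.range (m + 1), (1 / ((n : ℝ) + d + 1)) * ∑ k ∈ Finset.range (n + 1),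
        (-1 : ℝ) ^ k * (n.choose k : ℝ) * ((k : ℝ) + u) ^ m) =
      (1 / (d.factorial : ℝ)) * ∑ k ∈ Finset.range (d + 1),
        rStirling (1 - u) d k * (Polynomial.aeval u (Polynomial.bernoulli (m + k))) := by
  rw [← factorial_mul_hasseSum, one_div, inv_mul_cancel_left₀ (by positivity)]
  rfl

theorem stmt_7 (m : ℕ) (hm : 1 ≤ m) (u : ℝ) (hu : 0 < u) (d : ℕ) :
    (∑ n ∈ Finset.range (m + 1), (1 / ((n : ℝ) + d + 1)) * ∑ k ∈ Finset.range (n + 1),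
        (-1 : ℝ) ^ k * (n.choose k : ℝ) * ((k : ℝ) + u) ^ m) =
      (1 / (d.factorial : ℝ)) * ∑ k ∈ Finset.range (d + 1),
        rStirling (1 - u) d k * (Polynomial.aeval u (Polynomial.bernoulli (m + k))) :=
  stmt_7_general m u d
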